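/- If the true preference profile is aligned with the tier structure t (every student prefers any school in an earlier tier to any school in a later tier), then the tiered deferred acceptance mechanism under t is outcome-equivalent to the deferred acceptance mechanism and hence is strategy-proof on this preference domain. -/
import Mathlib


set_option linter.unusedSectionVars false

namespace SchoolChoice

/-- A strict preference over `S ∪ {self}`, encoded by an injective ranking function on
`Option S`; `none` denotes being unmatched (the student himself), and a smaller rank
means more preferred. Injective rankings on a finite set are exactly strict linear orders. -/
structure Pref (S : Type) where
  rank : Option S → ℕ
  inj : Function.Injective rank

/-- Quotas together with strict priorities of the schools: `prank s` ranks the students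
at school `s`, a smaller rank meaning higher priority. -/
structure Prio (I S : Type) where
  quota : S → ℕ
  prank : S → I → ℕ
  inj : ∀ s, Function.Injective (prank s)

variable {I S : Type} [Fintype I] [Fintype S] [DecidableEq I] [DecidableEq S]

/-- `i` has strictly higher priority than `j` at school `s`. -/
def Prio.higher (E : Prio I S) (s : S) (i j : I) : Prop :=
  E.prank s i < E.prank s j

/-- A matching assigns to each student a school or himself (`none`). -/
abbrev Matching (I S : Type) := I → Option S

/-- The set of students assigned to school `s`. -/
def assigned (μ : Matching I S) (s : S) : Finset I :=
  Finset.univ.filter (fun i => μ i = some s)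

/-- Quotas are respected. -/
def Feasible (E : Prio I S) (μ : Matching I S) : Prop :=
  ∀ s, (assigned μ s).card ≤ E.quota s

/-- `(i, s)` is a blocking pair of `μ` with respect to preferences `R`:
`i` strictly prefers `s` to his assignment, and either `s` has an empty seat
(wastefulness) or some student assigned to `s` has lower priority than `i`
(justified envy). -/
def Blocks (E : Prio I S) (R : I → Pref S) (μ : Matching I S) (i : I) (s : S) : Prop :=
  (R i).rank (some s) < (R i).rank (μ i) ∧
    ((assigned μ s).card < E.quota s ∨ ∃ j, μ j = some s ∧ E.higher s i j)

/-- Individual rationality: every student weakly prefers his assignment to being unmatched. -/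
def IndivRat (R : I → Pref S) (μ : Matching I S) : Prop :=
  ∀ i, (R i).rank (μ i) ≤ (R i).rank none

/-- Non-wastefulness: no student prefers a school with an empty seat to his assignment. -/
def NonWasteful (E : Prio I S) (R : I → Pref S) (μ : Matching I S) : Prop :=
  ∀ i s, (R i).rank (some s) < (R i).rank (μ i) → E.quota s ≤ (assigned μ s).card

/-- Stability: feasible, individually rational, and no blocking pair
(no justified envy and non-wasteful). -/
def Stable (E : Prio I S) (R : I → Pref S) (μ : Matching I S) : Prop :=
  Feasible E μ ∧ IndivRat R μ ∧ ∀ i s, ¬ Blocks E R μ i s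

/-- The student-optimal stable matching for the (reported) preferences. -/
def StudentOptimal (E : Prio I S) (R : I → Pref S) (μ : Matching I S) : Prop :=
  Stable E R μ ∧ ∀ ν, Stable E R ν → ∀ i, (R i).rank (μ i) ≤ (R i).rank (ν i)

open Classical in
/-- The student-proposing deferred acceptance mechanism: by the Gale–Shapley theorem its
outcome is the (unique) student-optimal stable matching of the reported preferences. -/
noncomputable def DA (E : Prio I S) (R : I → Pref S) : Matching I S :=
  if h : ∃ μ, StudentOptimal E R μ then h.choose else fun _ => none

/-- A strict upper bound for the values of a ranking. -/
noncomputable def bnd (p : Pref S) : ℕ := (Finset.univ.sup p.rank) + 1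

lemma rank_lt_bnd (p : Pref S) (x : Option S) : p.rank x < bnd p :=
  Nat.lt_succ_of_le (Finset.le_sup (Finset.mem_univ x))

private lemma mul_add_lt {a K B r : ℕ} (ha : a ≤ K) (hr : r < B) :
    a * B + r < (K + 1) * B := by
  calc a * B + r < a * B + B := by omega
    _ = (a + 1) * B := by ring
    _ ≤ (K + 1) * B := Nat.mul_le_mul (by omega) le_rfl

/-- Is an alternative "inside the market" `A`?  `none` always is. -/
def goodB (A : S → Prop) [DecidablePred A] : Option S → Bool
  | none => true
  | some s => decide (A s)

/-- The preference truncated to the set of schools `A`: schools in `A` (and the outside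
option `none`) keep their relative order, while all schools outside `A` are pushed below
`none` (become unacceptable), keeping their relative order among themselves. -/
noncomputable def trunc (A : S → Prop) [DecidablePred A] (p : Pref S) : Pref S where
  rank x := (if goodB A x then 0 else bnd p) + p.rank x
  inj := by
    intro x y h
    by_cases hx : goodB A x <;> by_cases hy : goodB A y <;>
      simp only [hx, hy, if_true, if_false, Bool.false_eq_true, zero_add] at h
    · exact p.inj h
    · have := rank_lt_bnd p x; omega
    · have := rank_lt_bnd p y; omega
    · exact p.inj (by omega)

/-- The reshuffled preference with respect to a tier structure `t`: acceptable schools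
are grouped by tier in increasing tier order (keeping the original relative order within
each tier) above `none`, and all unacceptable schools are placed below `none`. -/
noncomputable def reshuffle (t : S → ℕ) (p : Pref S) : Pref S where
  rank x :=
    Option.elim x ((Finset.univ.sup t + 1) * bnd p)
      (fun s =>
        if p.rank (some s) < p.rank none then t s * bnd p + p.rank (some s)
        else (Finset.univ.sup t + 1) * bnd p + 1 + p.rank (some s))
  inj := by
    have hB : ∀ x, p.rank x < bnd p := rank_lt_bnd p
    have hK : ∀ s : S, t s ≤ Finset.univ.sup t := fun s => Finset.le_sup (Finset.mem_univ s)
    intro x y h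
    rcases x with _ | s <;> rcases y with _ | s' <;>
      simp only [Option.elim_none, Option.elim_some] at h
    · rfl
    · by_cases hy : p.rank (some s') < p.rank none <;> simp only [hy, if_true, if_false] at h
      · have := mul_add_lt (hK s') (hB (some s')); omega
      · omega
    · by_cases hx : p.rank (some s) < p.rank none <;> simp only [hx, if_true, if_false] at h
      · have := mul_add_lt (hK s) (hB (some s)); omega
      · omega
    · by_cases hx : p.rank (some s) < p.rank none <;>
        by_cases hy : p.rank (some s') < p.rank none <;>
        simp only [hx, hy, if_true, if_false] at h
      · have hts : t s = t s' := by
          rcases Nat.lt_trichotomy (t s) (t s') with h1 | h1 | h1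
          · have h2 : t s * bnd p + p.rank (some s) < t s' * bnd p + p.rank (some s') := by
              have h3 := mul_add_lt (a := t s) (K := t s' - 1) (B := bnd p) (by omega) (hB (some s))
              have h4 : (t s' - 1 + 1) * bnd p = t s' * bnd p := by congr 1; omega
              omega
            omega
          · exact h1
          · have h2 : t s' * bnd p + p.rank (some s') < t s * bnd p + p.rank (some s) := by
              have h3 := mul_add_lt (a := t s') (K := t s - 1) (B := bnd p) (by omega) (hB (some s'))
              have h4 : (t s - 1 + 1) * bnd p = t s * bnd p := by congr 1; omega
              omega
            omega
        rw [hts] at h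
        exact p.inj (by omega)
      · have := mul_add_lt (hK s) (hB (some s)); omega
      · have := mul_add_lt (hK s') (hB (some s')); omega
      · exact p.inj (by omega)

/-- A tier structure assigning each school a tier in `{1, …, T}`, each tier nonempty. -/
def IsTierStructure (t : S → ℕ) (T : ℕ) : Prop :=
  (∀ s, 1 ≤ t s ∧ t s ≤ T) ∧ ∀ k, 1 ≤ k → k ≤ T → ∃ s, t s = k

/-- Rounds `1, …, k` of the tiered deferred acceptance mechanism: in round `k` the
students left unmatched so far participate in the DA mechanism with their preferences
truncated to the tier-`k` schools (already matched students participate with nothing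
acceptable); students matched in earlier rounds keep their assignments. -/
noncomputable def TDAaux (E : Prio I S) (t : S → ℕ) (Q : I → Pref S) : ℕ → Matching I S
  | 0 => fun _ => none
  | k + 1 => fun i =>
      match TDAaux E t Q k i with
      | some s => some s
      | none =>
          DA E (fun j =>
            if TDAaux E t Q k j = none then trunc (fun s => t s = k + 1) (Q j)
            else trunc (fun _ => False) (Q j)) i

/-- The tiered deferred acceptance mechanism under tier structure `t`. -/
noncomputable def TDA (E : Prio I S) (t : S → ℕ) (Q : I → Pref S) : Matching I S :=
  TDAaux E t Q (Finset.univ.sup t)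

/-- `Q` is a (pure) Nash equilibrium of the preference revelation game induced by the
mechanism `f` when the true preferences are `R`: no student can obtain a school he truly
strictly prefers by unilaterally changing his report. -/
def NashEq (R : I → Pref S) (f : (I → Pref S) → Matching I S) (Q : I → Pref S) : Prop :=
  ∀ (i : I) (Qi' : Pref S),
    (R i).rank (f Q i) ≤ (R i).rank (f (Function.update Q i Qi') i)

/-- `μ` is a Nash equilibrium outcome of the revelation game induced by `f` at true
preferences `R`. -/
def NashOutcome (R : I → Pref S) (f : (I → Pref S) → Matching I S) (μ : Matching I S) : Prop :=
  ∃ Q, NashEq R f Q ∧ f Q = μ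

/-- The preference `p` is aligned with the tier structure `t`: a (weakly) more preferred
school always lies in a weakly earlier tier. -/
def AlignedPref (t : S → ℕ) (p : Pref S) : Prop :=
  ∀ s s' : S, p.rank (some s) ≤ p.rank (some s') → t s ≤ t s'

/-- `p` lists exactly the school in `o` (if any) as acceptable. -/
def OnlyAcceptable (p : Pref S) (o : Option S) : Prop :=
  ∀ s : S, (p.rank (some s) < p.rank none ↔ o = some s)

/-- An Ergin cycle of the priority structure among the schools in `A`. -/
def Cycle (E : Prio I S) (A : S → Prop) : Prop :=
  ∃ a b : S, A a ∧ A b ∧ a ≠ b ∧ ∃ i j k : I,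
    E.higher a i j ∧ E.higher a j k ∧ E.higher b k i ∧
    ∃ Ia Ib : Finset I, Disjoint Ia Ib ∧
      (∀ l ∈ Ia, l ≠ i ∧ l ≠ j ∧ l ≠ k ∧ E.higher a l j) ∧
      (∀ l ∈ Ib, l ≠ i ∧ l ≠ j ∧ l ≠ k ∧ E.higher b l i) ∧
      Ia.card = E.quota a - 1 ∧ Ib.card = E.quota b - 1

/-- Within-tier acyclicity of a generalized priority structure: no Ergin cycle among the
schools of any single tier. -/
def WithinTierAcyclic (E : Prio I S) (t : S → ℕ) : Prop :=
  ∀ k : ℕ, ¬ Cycle E (fun s => t s = k)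

/-- The (strict) preference `pr` of school `s` over sets of students is a responsive
extension of its priorities. -/
def Responsive (E : Prio I S) (s : S) (pr : Finset I → Finset I → Prop) : Prop :=
  ∀ (J : Finset I) (i j : I), i ∉ J → j ∉ J → E.higher s i j →
    pr (insert i J) (insert j J)

/-- `t` is a refinement of `t'`: `t'` ranks `a` in a strictly later tier than `b` only
if `t` does. -/
def Refines (t t' : S → ℕ) : Prop :=
  ∀ a b : S, t' b < t' a → t b < t a



/-! ### Auxiliary development: an explicit deferred-acceptance algorithm -/

open scoped Classical

lemma rank_lt_of_le_ne (p : Pref S) {x y : Option S} (h : p.rank x ≤ p.rank y)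
    (hne : x ≠ y) : p.rank x < p.rank y :=
  lt_of_le_of_ne h (fun e => hne (p.inj e))

/-- Acceptable schools of rank at least `n`. -/
noncomputable def cand (p : Pref S) (n : ℕ) : Finset S :=
  Finset.univ.filter fun s => n ≤ p.rank (some s) ∧ p.rank (some s) < p.rank none

lemma mem_cand {p : Pref S} {n : ℕ} {s : S} :
    s ∈ cand p n ↔ n ≤ p.rank (some s) ∧ p.rank (some s) < p.rank none := by
  simp [cand]

/-- The best acceptable school of rank at least `n` (the current proposal), if any. -/
noncomputable def target (p : Pref S) (n : ℕ) : Option S :=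
  if h : (cand p n).Nonempty then
    some (Finset.exists_min_image (cand p n) (fun s => p.rank (some s)) h).choose
  else none

lemma target_eq_some {p : Pref S} {n : ℕ} {s : S} (h : target p n = some s) :
    s ∈ cand p n ∧ ∀ s' ∈ cand p n, p.rank (some s) ≤ p.rank (some s') := by
  unfold target at h
  split_ifs at h with hne
  · obtain ⟨hmem, hmin⟩ :=
      (Finset.exists_min_image (cand p n) (fun s => p.rank (some s)) hne).choose_spec
    obtain rfl := Option.some.inj h
    exact ⟨hmem, hmin⟩

lemma target_eq_none {p : Pref S} {n : ℕ} (h : target p n = none) :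
    ∀ s, ¬ s ∈ cand p n := by
  intro s hs
  unfold target at h
  rw [dif_pos ⟨s, hs⟩] at h
  cases h

lemma target_le_none (p : Pref S) (n : ℕ) : p.rank (target p n) ≤ p.rank none := by
  cases htg : target p n with
  | none => exact le_rfl
  | some s => exact le_of_lt (mem_cand.mp (target_eq_some htg).1).2

lemma target_ge {p : Pref S} {n : ℕ} {s : S} (h : target p n = some s) :
    n ≤ p.rank (some s) :=
  (mem_cand.mp (target_eq_some h).1).1

lemma target_acc {p : Pref S} {n : ℕ} {s : S} (h : target p n = some s) :
    p.rank (some s) < p.rank none :=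
  (mem_cand.mp (target_eq_some h).1).2

/-- Minimality of the target among acceptable options of rank at least `n`. -/
lemma target_min {p : Pref S} {n : ℕ} {x : Option S} (hx : p.rank x ≤ p.rank none)
    (hnx : x = none ∨ n ≤ p.rank x) : p.rank (target p n) ≤ p.rank x := by
  rcases hnx with rfl | hnx
  · exact target_le_none p n
  · cases x with
    | none => exact target_le_none p n
    | some s =>
      have hacc : p.rank (some s) < p.rank none := rank_lt_of_le_ne p hx (by simp)
      have hmem : s ∈ cand p n := mem_cand.mpr ⟨hnx, hacc⟩
      cases htg : target p n with
      | none => exact absurd hmem (target_eq_none htg s)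
      | some s' => exact (target_eq_some htg).2 s hmem

lemma target_mono (p : Pref S) {n m : ℕ} (h : n ≤ m) :
    p.rank (target p n) ≤ p.rank (target p m) := by
  cases htg : target p m with
  | none => exact target_le_none p n
  | some s =>
    exact target_min (le_of_lt (target_acc htg)) (Or.inr (le_trans h (target_ge htg)))

/-- Students currently proposing to `s`. -/
noncomputable def pool (R : I → Pref S) (c : I → ℕ) (s : S) : Finset I :=
  Finset.univ.filter fun i => target (R i) (c i) = some s

lemma mem_pool {R : I → Pref S} {c : I → ℕ} {s : S} {i : I} :
    i ∈ pool R c s ↔ target (R i) (c i) = some s := by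
  simp [pool]

/-- One rejection step of the deferred acceptance algorithm. -/
noncomputable def step (E : Prio I S) (R : I → Pref S) (c : I → ℕ) : I → ℕ :=
  if h : ∃ s, E.quota s < (pool R c s).card then
    have hpos : (pool R c h.choose).Nonempty :=
      Finset.card_pos.mp (lt_of_le_of_lt (Nat.zero_le _) h.choose_spec)
    Function.update c
      (Finset.exists_max_image (pool R c h.choose) (fun i => E.prank h.choose i) hpos).choose
      ((R (Finset.exists_max_image (pool R c h.choose) (fun i => E.prank h.choose i)
        hpos).choose).rank (some h.choose) + 1)
  else c

/-- Anatomy of a step. -/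
lemma step_spec (E : Prio I S) (R : I → Pref S) (c : I → ℕ) :
    (step E R c = c ∧ ∀ s, (pool R c s).card ≤ E.quota s) ∨
    (∃ s r, E.quota s < (pool R c s).card ∧ r ∈ pool R c s ∧
      (∀ j ∈ pool R c s, E.prank s j ≤ E.prank s r) ∧
      step E R c = Function.update c r ((R r).rank (some s) + 1)) := by
  by_cases h : ∃ s, E.quota s < (pool R c s).card
  · right
    have hpos : (pool R c h.choose).Nonempty :=
      Finset.card_pos.mp (lt_of_le_of_lt (Nat.zero_le _) h.choose_spec)
    obtain ⟨hmem, hmax⟩ :=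
      (Finset.exists_max_image (pool R c h.choose) (fun i => E.prank h.choose i) hpos).choose_spec
    refine ⟨h.choose, _, h.choose_spec, hmem, hmax, ?_⟩
    unfold step
    rw [dif_pos h]
  · left
    constructor
    · unfold step; rw [dif_neg h]
    · intro s; by_contra hs; exact h ⟨s, not_le.mp hs⟩

lemma le_step (E : Prio I S) (R : I → Pref S) (c : I → ℕ) (i : I) : c i ≤ step E R c i := by
  rcases step_spec E R c with ⟨heq, _⟩ | ⟨s, r, _, hr, _, heq⟩
  · rw [heq]
  · rw [heq]
    by_cases hir : i = r
    · subst hir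
      rw [Function.update_self]
      have := target_ge (mem_pool.mp hr)
      omega
    · rw [Function.update_of_ne hir]

/-- The (pointer) trajectory of the algorithm, started at the all-zero state. -/
noncomputable def traj (E : Prio I S) (R : I → Pref S) : ℕ → I → ℕ :=
  fun n => (step E R)^[n] (fun _ => 0)

lemma traj_succ (E : Prio I S) (R : I → Pref S) (n : ℕ) :
    traj E R (n + 1) = step E R (traj E R n) := by
  unfold traj; rw [Function.iterate_succ_apply']

lemma traj_mono (E : Prio I S) (R : I → Pref S) {n m : ℕ} (h : n ≤ m) (i : I) :
    traj E R n i ≤ traj E R m i := by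
  induction m with
  | zero => simp_all
  | succ m ih =>
    rcases Nat.lt_or_ge n (m + 1) with hlt | hge
    · have := ih (by omega)
      rw [traj_succ]
      exact le_trans this (le_step E R _ i)
    · have : n = m + 1 := by omega
      subst this; exact le_rfl

/-- Pointers never pass the rank of being unmatched. -/
lemma traj_bound (E : Prio I S) (R : I → Pref S) (n : ℕ) (i : I) :
    traj E R n i ≤ (R i).rank none := by
  induction n with
  | zero => simp [traj]
  | succ n ih =>
    rw [traj_succ]
    rcases step_spec E R (traj E R n) with ⟨heq, _⟩ | ⟨s, r, _, hr, _, heq⟩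
    · rw [heq]; exact ih
    · rw [heq]
      by_cases hir : i = r
      · subst hir
        rw [Function.update_self]
        have := target_acc (mem_pool.mp hr)
        omega
      · rw [Function.update_of_ne hir]; exact ih

/-- A strict measure decrease unless at a fixed point. -/
lemma step_measure (E : Prio I S) (R : I → Pref S) (c : I → ℕ) :
    step E R c = c ∨
      (Finset.univ.sum fun i => (R i).rank none - step E R c i) <
        Finset.univ.sum fun i => (R i).rank none - c i := by
  rcases step_spec E R c with ⟨heq, _⟩ | ⟨s, r, _, hr, _, heq⟩
  · exact Or.inl heq
  · right
    have hlt : c r < step E R c r := by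
      rw [heq, Function.update_self]
      have := target_ge (mem_pool.mp hr)
      omega
    have hbd : step E R c r ≤ (R r).rank none := by
      rw [heq, Function.update_self]
      have := target_acc (mem_pool.mp hr)
      omega
    have hle : ∀ i, (R i).rank none - step E R c i ≤ (R i).rank none - c i := by
      intro i
      have := le_step E R c i
      omega
    refine Finset.sum_lt_sum (fun i _ => hle i) ⟨r, Finset.mem_univ r, ?_⟩
    omega

lemma iter_fix {α : Type*} (f : α → α) (φ : α → ℕ) (h : ∀ a, f a = a ∨ φ (f a) < φ a) :
    ∀ n a, φ a ≤ n → f (f^[n] a) = f^[n] a := by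
  intro n
  induction n with
  | zero =>
    intro a ha
    rcases h a with h1 | h1
    · simpa [Function.iterate_fixed h1] using h1
    · omega
  | succ n ih =>
    intro a ha
    rcases h a with h1 | h1
    · have h2 : f^[n+1] a = a := Function.iterate_fixed h1 (n + 1)
      rw [h2]; exact h1
    · rw [Function.iterate_succ_apply]
      exact ih (f a) (by omega)

/-- The number of steps after which the algorithm has surely terminated. -/
noncomputable def NN (R : I → Pref S) : ℕ := Finset.univ.sum fun i => (R i).rank none

lemma traj_fix (E : Prio I S) (R : I → Pref S) :
    step E R (traj E R (NN R)) = traj E R (NN R) := by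
  apply iter_fix (step E R) (fun c => Finset.univ.sum fun i => (R i).rank none - c i)
    (step_measure E R)
  simp [NN]

lemma traj_stable (E : Prio I S) (R : I → Pref S) {n : ℕ} (h : NN R ≤ n) :
    traj E R n = traj E R (NN R) := by
  induction n with
  | zero => simp_all
  | succ n ih =>
    rcases Nat.lt_or_ge (NN R) (n + 1) with hlt | hge
    · rw [traj_succ, ih (by omega), traj_fix]
    · have : NN R = n + 1 := by omega
      rw [this]

/-- The outcome of the deferred acceptance algorithm. -/
noncomputable def DAout (E : Prio I S) (R : I → Pref S) : Matching I S :=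
  fun i => target (R i) (traj E R (NN R) i)

lemma pool_fix (E : Prio I S) (R : I → Pref S) (s : S) :
    (pool R (traj E R (NN R)) s).card ≤ E.quota s := by
  rcases step_spec E R (traj E R (NN R)) with ⟨_, h2⟩ | ⟨s', r, _, hr, _, heq⟩
  · exact h2 s
  · exfalso
    have h1 : traj E R (NN R) r < (R r).rank (some s') + 1 := by
      have := target_ge (mem_pool.mp hr); omega
    have h2 := traj_fix E R
    rw [heq] at h2
    have := congrFun h2 r
    rw [Function.update_self] at this
    omega

lemma assigned_DAout (E : Prio I S) (R : I → Pref S) (s : S) :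
    assigned (DAout E R) s = pool R (traj E R (NN R)) s := by
  apply Finset.filter_congr
  intro i _
  simp [DAout, pool]

/-- The key invariant: after being rejected by `s`, school `s` always has a full quota
of proposers with higher priority. -/
def InvA (E : Prio I S) (R : I → Pref S) (c : I → ℕ) : Prop :=
  ∀ i s, (R i).rank (some s) < (R i).rank none → (R i).rank (some s) < c i →
    E.quota s ≤ ((pool R c s).filter fun j => E.higher s j i).card

lemma invA_traj (E : Prio I S) (R : I → Pref S) : ∀ n, InvA E R (traj E R n) := by
  intro n
  induction n with
  | zero => intro i s _ h2; simp [traj] at h2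
  | succ n ih =>
    rw [traj_succ]
    set c := traj E R n with hc
    rcases step_spec E R c with ⟨heq, _⟩ | ⟨s₀, r, hover, hr, hmax, heq⟩
    · rw [heq]; exact ih
    · rw [heq]
      intro i s hacc hlt
      have hpool : ∀ j, j ≠ r → (j ∈ pool R (Function.update c r ((R r).rank (some s₀) + 1)) s
          ↔ j ∈ pool R c s) := by
        intro j hj
        simp [mem_pool, Function.update_of_ne hj]
      have hrnot : r ∉ pool R (Function.update c r ((R r).rank (some s₀) + 1)) s₀ := by
        rw [mem_pool, Function.update_self]
        intro hcon
        have := target_ge hcon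
        omega
      by_cases hold : (R i).rank (some s) < c i
      · -- the pair was already covered before the step
        have hBase := ih i s hacc hold
        by_cases hrp : r ∈ pool R c s
        · -- then s = s₀ and the pool loses exactly r
          have hs : s = s₀ := by
            have h1 := mem_pool.mp hrp
            have h2 := mem_pool.mp hr
            rw [h1] at h2
            exact Option.some.inj h2
          subst hs
          have hsub : (pool R c s).erase r ⊆
              pool R (Function.update c r ((R r).rank (some s) + 1)) s := by
            intro j hj
            obtain ⟨hjne, hjmem⟩ := Finset.mem_erase.mp hj
            exact (hpool j hjne).mpr hjmem
          by_cases hrhi : E.higher s r i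
          · -- everybody in the pool is higher than i
            have hall : ∀ j ∈ (pool R c s).erase r, E.higher s j i := by
              intro j hj
              obtain ⟨hjne, hjmem⟩ := Finset.mem_erase.mp hj
              have h1 := hmax j hjmem
              have h2 : E.prank s j ≠ E.prank s r := fun e => hjne (E.inj s e)
              unfold Prio.higher at hrhi ⊢
              omega
            calc E.quota s ≤ (pool R c s).card - 1 := by
                  have := Finset.card_erase_of_mem hr; omega
              _ = ((pool R c s).erase r).card := (Finset.card_erase_of_mem hr).symm
              _ ≤ ((pool R (Function.update c r ((R r).rank (some s) + 1)) s).filter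
                    fun j => E.higher s j i).card := by
                  apply Finset.card_le_card
                  intro j hj
                  exact Finset.mem_filter.mpr ⟨hsub hj, hall j hj⟩
          · -- r was not among the higher ones
            refine le_trans hBase (Finset.card_le_card ?_)
            intro j hj
            obtain ⟨hjmem, hjhi⟩ := Finset.mem_filter.mp hj
            have hjne : j ≠ r := by rintro rfl; exact hrhi hjhi
            exact Finset.mem_filter.mpr ⟨(hpool j hjne).mpr hjmem, hjhi⟩
        · -- the old pool is intact
          refine le_trans hBase (Finset.card_le_card ?_)
          intro j hj
          obtain ⟨hjmem, hjhi⟩ := Finset.mem_filter.mp hj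
          have hjne : j ≠ r := by rintro rfl; exact hrp hjmem
          exact Finset.mem_filter.mpr ⟨(hpool j hjne).mpr hjmem, hjhi⟩
      · -- new pair: i must be r, rejected from s = s₀
        have hir : i = r := by
          by_contra hir
          rw [Function.update_of_ne hir] at hlt
          exact hold hlt
        subst hir
        rw [Function.update_self] at hlt
        have hs : s = s₀ := by
          have h1 : (R i).rank (target (R i) (c i)) ≤ (R i).rank (some s) :=
            target_min (le_of_lt hacc) (Or.inr (by omega))
          have h2 := mem_pool.mp hr
          rw [h2] at h1
          have : (R i).rank (some s₀) = (R i).rank (some s) := by omega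
          exact (Option.some.inj ((R i).inj this)).symm
        subst hs
        have hall : ∀ j ∈ (pool R c s).erase i, E.higher s j i := by
          intro j hj
          obtain ⟨hjne, hjmem⟩ := Finset.mem_erase.mp hj
          have h1 := hmax j hjmem
          have h2 : E.prank s j ≠ E.prank s i := fun e => hjne (E.inj s e)
          unfold Prio.higher
          omega
        calc E.quota s ≤ (pool R c s).card - 1 := by omega
          _ = ((pool R c s).erase i).card := (Finset.card_erase_of_mem hr).symm
          _ ≤ _ := by
              apply Finset.card_le_card
              intro j hj
              obtain ⟨hjne, hjmem⟩ := Finset.mem_erase.mp hj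
              exact Finset.mem_filter.mpr ⟨(hpool j hjne).mpr hjmem, hall j hj⟩

/-- The algorithm's outcome is stable. -/
lemma DAout_stable (E : Prio I S) (R : I → Pref S) : Stable E R (DAout E R) := by
  refine ⟨?_, ?_, ?_⟩
  · intro s
    rw [assigned_DAout]
    exact pool_fix E R s
  · intro i
    exact target_le_none _ _
  · intro i s hblock
    obtain ⟨hlt, hseat⟩ := hblock
    have hacc : (R i).rank (some s) < (R i).rank none :=
      lt_of_lt_of_le hlt (target_le_none _ _)
    have hci : (R i).rank (some s) < traj E R (NN R) i := by
      by_contra hc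
      have := target_min (p := R i) (n := traj E R (NN R) i) (x := some s)
        (le_of_lt hacc) (Or.inr (by omega))
      unfold DAout at hlt
      omega
    have hA := invA_traj E R (NN R) i s hacc hci
    have hsub : ((pool R (traj E R (NN R)) s).filter fun j => E.higher s j i) ⊆
        assigned (DAout E R) s := by
      rw [assigned_DAout]; exact Finset.filter_subset _ _
    have hfull : E.quota s ≤ (assigned (DAout E R) s).card :=
      le_trans hA (Finset.card_le_card hsub)
    rcases hseat with hvac | ⟨j, hj, hhi⟩
    · omega
    · -- everyone assigned is higher than i
      have hcards : (assigned (DAout E R) s).card ≤ E.quota s := by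
        rw [assigned_DAout]; exact pool_fix E R s
    
      have hEq : ((pool R (traj E R (NN R)) s).filter fun j => E.higher s j i) =
          assigned (DAout E R) s := by
        apply Finset.eq_of_subset_of_card_le hsub
        omega
      have hjmem : j ∈ assigned (DAout E R) s := by
        simp [assigned, hj]
      rw [← hEq] at hjmem
      have := (Finset.mem_filter.mp hjmem).2
      unfold Prio.higher at this hhi
      omega

/-- The optimality invariant: pointers never pass any school available in a stable
matching. -/
lemma invB_traj (E : Prio I S) (R : I → Pref S) (lam : Matching I S)
    (hlam : Stable E R lam) : ∀ n i, traj E R n i ≤ (R i).rank (lam i) := by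
  intro n
  induction n with
  | zero => intro i; simp [traj]
  | succ n ih =>
    intro i
    rw [traj_succ]
    set c := traj E R n with hc
    rcases step_spec E R c with ⟨heq, _⟩ | ⟨s₀, r, hover, hr, hmax, heq⟩
    · rw [heq]; exact ih i
    · rw [heq]
      by_cases hir : i = r
      · subst hir
        rw [Function.update_self]
        by_contra hcon
        push_neg at hcon
        have hlam_i : lam i = some s₀ := by
          have h1 : (R i).rank (lam i) ≤ (R i).rank (some s₀) := by omega
          have h2 : (R i).rank (lam i) ≤ (R i).rank none := hlam.2.1 i
          have h3 : c i ≤ (R i).rank (lam i) := ih i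
          cases hl : lam i with
          | none =>
            rw [hl] at h1
            have := target_acc (mem_pool.mp hr)
            omega
          | some w =>
            rw [hl] at h1 h2 h3
            have h4 : (R i).rank (target (R i) (c i)) ≤ (R i).rank (some w) :=
              target_min h2 (Or.inr h3)
            rw [mem_pool.mp hr] at h4
            have : (R i).rank (some s₀) = (R i).rank (some w) := by omega
            rw [((R i).inj this).symm]
        -- find a blocking pair of lam
        have hcard : ((pool R c s₀).filter fun k => lam k = some s₀).card ≤ E.quota s₀ := by
          refine le_trans (Finset.card_le_card ?_) (hlam.1 s₀)
          intro k hk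
          simp only [assigned, Finset.mem_filter, Finset.mem_univ, true_and]
          exact (Finset.mem_filter.mp hk).2
        have hex : ∃ k ∈ pool R c s₀, ¬ lam k = some s₀ := by
          by_contra hcon2
          push_neg at hcon2
          have : (pool R c s₀).filter (fun k => lam k = some s₀) = pool R c s₀ :=
            Finset.filter_eq_self.mpr hcon2
          rw [this] at hcard
          omega
        obtain ⟨k, hkmem, hkne⟩ := hex
        have hblk : Blocks E R lam k s₀ := by
          constructor
          · have hk1 : c k ≤ (R k).rank (lam k) := ih k
            have hk2 : (R k).rank (lam k) ≤ (R k).rank none := hlam.2.1 k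
            have hk4 : (R k).rank (target (R k) (c k)) ≤ (R k).rank (lam k) := by
              cases hlk : lam k with
              | none => exact target_le_none _ _
              | some w =>
                rw [hlk] at hk1 hk2
                exact target_min hk2 (Or.inr hk1)
            rw [mem_pool.mp hkmem] at hk4
            have hne2 : (R k).rank (some s₀) ≠ (R k).rank (lam k) := by
              intro e
              exact hkne ((R k).inj e).symm
            omega
          · right
            refine ⟨i, hlam_i, ?_⟩
            have h1 := hmax k hkmem
            have h2 : E.prank s₀ k ≠ E.prank s₀ i := by
              intro e
              have : k = i := E.inj s₀ e
              subst this
              exact hkne hlam_i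
            unfold Prio.higher
            omega
        exact hlam.2.2 k s₀ hblk
      · rw [Function.update_of_ne hir]; exact ih i

/-- The algorithm's outcome is the student-optimal stable matching. -/
lemma DAout_optimal (E : Prio I S) (R : I → Pref S) : StudentOptimal E R (DAout E R) := by
  refine ⟨DAout_stable E R, ?_⟩
  intro lam hlam i
  have h1 := invB_traj E R lam hlam (NN R) i
  have h2 : (R i).rank (lam i) ≤ (R i).rank none := hlam.2.1 i
  cases hl : lam i with
  | none => exact target_le_none _ _
  | some w =>
    rw [hl] at h1 h2
    exact target_min h2 (Or.inr h1)

lemma SO_unique (E : Prio I S) (R : I → Pref S) {μ ν : Matching I S}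
    (hμ : StudentOptimal E R μ) (hν : StudentOptimal E R ν) : μ = ν := by
  funext i
  have h1 := hμ.2 ν hν.1 i
  have h2 := hν.2 μ hμ.1 i
  exact (R i).inj (le_antisymm h1 h2)

lemma DA_spec (E : Prio I S) (R : I → Pref S) : StudentOptimal E R (DA E R) := by
  unfold DA
  rw [dif_pos ⟨DAout E R, DAout_optimal E R⟩]
  exact (Exists.choose_spec (⟨DAout E R, DAout_optimal E R⟩ : ∃ μ, StudentOptimal E R μ))

lemma DA_eq_DAout (E : Prio I S) (R : I → Pref S) : DA E R = DAout E R :=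
  SO_unique E R (DA_spec E R) (DAout_optimal E R)

/-- **Blocking lemma** (Gale–Sotomayor, many-to-one responsive version): if some
nonempty set of students strictly prefers a feasible matching `ν` to the DA outcome,
then `ν` admits a blocking pair whose student does not belong to that set. -/
lemma blocking_lemma (E : Prio I S) (R : I → Pref S) (ν : Matching I S)
    (hF : Feasible E ν)
    (hne : (Finset.univ.filter fun j =>
      (R j).rank (ν j) < (R j).rank (DAout E R j)).Nonempty) :
    ∃ k s, (R k).rank (DAout E R k) ≤ (R k).rank (ν k) ∧ Blocks E R ν k s := by
  classical
  have hst : Stable E R (DAout E R) := DAout_stable E R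
  set μ := DAout E R with hμdef
  set J : Finset I := Finset.univ.filter fun j => (R j).rank (ν j) < (R j).rank (μ j)
    with hJdef
  have hJmem : ∀ j, j ∈ J ↔ (R j).rank (ν j) < (R j).rank (μ j) := by
    intro j; simp [hJdef]
  have hJν : ∀ j ∈ J, ∃ s, ν j = some s ∧ (R j).rank (some s) < (R j).rank none ∧
      (R j).rank (some s) < (R j).rank (μ j) := by
    intro j hj
    have h1 := (hJmem j).mp hj
    have h2 : (R j).rank (μ j) ≤ (R j).rank none := hst.2.1 j
    cases hn : ν j with
    | none => rw [hn] at h1; omega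
    | some s => exact ⟨s, rfl, by rw [hn] at h1; omega, by rw [hn] at h1; omega⟩
  by_cases hA : ∃ j ∈ J, ∃ s k, ν j = some s ∧ μ k = some s ∧ k ∉ J ∧ ν k ≠ some s
  · -- Case A
    obtain ⟨j, hj, s, k, hνj, hμk, hkJ, hνk⟩ := hA
    have hkle : (R k).rank (μ k) ≤ (R k).rank (ν k) :=
      not_lt.mp (fun hgt => hkJ ((hJmem k).mpr hgt))
    obtain ⟨s', hνj', hacc', hlt'⟩ := hJν j hj
    have hss : s' = s := by
      rw [hνj] at hνj'
      exact (Option.some.inj hνj').symm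
    rw [hss] at hacc' hlt'
    refine ⟨k, s, hkle, ?_, ?_⟩
    · have h1 : (R k).rank (some s) ≤ (R k).rank (ν k) := by rw [← hμk]; exact hkle
      exact rank_lt_of_le_ne (R k) h1 (fun e => hνk e.symm)
    · have hnb := hst.2.2 j s
      have hsecond : ¬((assigned μ s).card < E.quota s ∨
          ∃ l, μ l = some s ∧ E.higher s j l) :=
        fun hor => hnb ⟨hlt', hor⟩
      push_neg at hsecond
      refine Or.inr ⟨j, hνj, ?_⟩
      have h1 := hsecond.2 k hμk
      have hkj : k ≠ j := by rintro rfl; exact hνk hνj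
      have h2 : E.prank s k ≠ E.prank s j := fun e => hkj (E.inj s e)
      unfold Prio.higher at h1 ⊢
      omega
  · -- Case B
    have hB : ∀ j ∈ J, ∀ s k, ν j = some s → μ k = some s → k ∉ J → ν k = some s := by
      intro j hj s k h1 h2 h3
      by_contra h4
      exact hA ⟨j, hj, s, k, h1, h2, h3, h4⟩
    set T : Finset S := Finset.univ.filter fun s => ∃ j ∈ J, ν j = some s with hTdef
    have hTmem : ∀ s, s ∈ T ↔ ∃ j ∈ J, ν j = some s := by intro s; simp [hTdef]
    have hTfull : ∀ s ∈ T, (assigned μ s).card = E.quota s := by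
      intro s hs
      obtain ⟨j, hj, hνj⟩ := (hTmem s).mp hs
      obtain ⟨s', hνj', hacc, hlt⟩ := hJν j hj
      have hss : s' = s := by
        rw [hνj] at hνj'
        exact (Option.some.inj hνj').symm
      rw [hss] at hlt
      have hnb := hst.2.2 j s
      have h2 : ¬ (assigned μ s).card < E.quota s := by
        intro h
        exact hnb ⟨hlt, Or.inl h⟩
      have h3 := hst.1 s
      omega
    -- counting: students matched into T under μ are matched into T under ν
    have hdisj : ∀ (lam : Matching I S), Finset.univ.filter
        (fun k => ∃ s ∈ T, lam k = some s) = T.biUnion (fun s => assigned lam s) := by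
      intro lam
      ext k
      simp only [Finset.mem_filter, Finset.mem_univ, true_and, Finset.mem_biUnion,
        assigned]
    have hcard : ∀ (lam : Matching I S),
        (Finset.univ.filter (fun k => ∃ s ∈ T, lam k = some s)).card =
          Finset.sum T (fun s => (assigned lam s).card) := by
      intro lam
      rw [hdisj lam]
      apply Finset.card_biUnion
      intro s hs s' hs' hss
      simp only [Finset.disjoint_left, assigned, Finset.mem_filter, Finset.mem_univ,
        true_and]
      intro k h1 h2
      rw [h1] at h2
      exact hss (Option.some.inj h2)
    set Cμ := Finset.univ.filter (fun k => ∃ s ∈ T, μ k = some s) with hCμ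
    set Cν := Finset.univ.filter (fun k => ∃ s ∈ T, ν k = some s) with hCν
    have hsub : Cμ ⊆ Cν := by
      intro k hk
      simp only [hCμ, Finset.mem_filter, Finset.mem_univ, true_and] at hk
      obtain ⟨s, hsT, hμk⟩ := hk
      obtain ⟨j, hj, hνj⟩ := (hTmem s).mp hsT
      simp only [hCν, Finset.mem_filter, Finset.mem_univ, true_and]
      by_cases hkJ : k ∈ J
      · obtain ⟨s', hνk, _, _⟩ := hJν k hkJ
        refine ⟨s', (hTmem s').mpr ⟨k, hkJ, hνk⟩, hνk⟩
      · exact ⟨s, hsT, hB j hj s k hνj hμk hkJ⟩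
    have hcards : Cν.card ≤ Cμ.card := by
      rw [hCμ, hCν, hcard μ, hcard ν]
      apply Finset.sum_le_sum
      intro s hs
      rw [hTfull s hs]
      exact hF s
    have hCeq : Cμ = Cν := Finset.eq_of_subset_of_card_le hsub hcards
    have hKB : ∀ j ∈ J, ∃ s ∈ T, μ j = some s := by
      intro j hj
      obtain ⟨s', hνj, _, _⟩ := hJν j hj
      have : j ∈ Cν := by
        simp only [hCν, Finset.mem_filter, Finset.mem_univ, true_and]
        exact ⟨s', (hTmem s').mpr ⟨j, hj, hνj⟩, hνj⟩
      rw [← hCeq] at this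
      simp only [hCμ, Finset.mem_filter, Finset.mem_univ, true_and] at this
      exact this
    -- the run of the algorithm
    have hex : ∀ j : I, ∃ n, target (R j) (traj E R n j) = μ j := fun j => ⟨NN R, rfl⟩
    set f : I → ℕ := fun j => Nat.find (hex j) with hf
    have hfNN : ∀ j, f j ≤ NN R := fun j => Nat.find_min' (hex j) rfl
    have htgt_final : ∀ j n, f j ≤ n → target (R j) (traj E R n j) = μ j := by
      intro j n hn
      have hfn : target (R j) (traj E R (f j) j) = μ j := Nat.find_spec (hex j)
      rcases le_or_gt n (NN R) with h1 | h1
      · have l1 : (R j).rank (target (R j) (traj E R (f j) j)) ≤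
            (R j).rank (target (R j) (traj E R n j)) :=
          target_mono (R j) (traj_mono E R hn j)
        have l2 : (R j).rank (target (R j) (traj E R n j)) ≤
            (R j).rank (target (R j) (traj E R (NN R) j)) :=
          target_mono (R j) (traj_mono E R h1 j)
        have l3 : (R j).rank (μ j) = (R j).rank (target (R j) (traj E R (NN R) j)) := rfl
        rw [hfn] at l1
        have l4 : (R j).rank (target (R j) (traj E R n j)) = (R j).rank (μ j) := by omega
        exact (R j).inj l4
      · rw [traj_stable E R (le_of_lt h1)]
        rfl
    have hchange : ∀ n j, traj E R (n+1) j ≠ traj E R n j →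
        ∃ s, target (R j) (traj E R n j) = some s ∧
          traj E R (n+1) j = (R j).rank (some s) + 1 := by
      intro n j hch
      rw [traj_succ] at hch ⊢
      rcases step_spec E R (traj E R n) with ⟨heq, _⟩ | ⟨s₀, r, hover, hr, hmax, heq⟩
      · rw [heq] at hch; exact absurd rfl hch
      · rw [heq] at hch ⊢
        by_cases hjr : j = r
        · subst hjr
          rw [Function.update_self]
          exact ⟨s₀, mem_pool.mp hr, rfl⟩
        · rw [Function.update_of_ne hjr] at hch
          exact absurd rfl hch
    have hnomove : ∀ j n, f j ≤ n → traj E R (n+1) j = traj E R n j := by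
      intro j n hn
      by_contra hch
      obtain ⟨s, htg, hval⟩ := hchange n j hch
      rw [htgt_final j n hn] at htg
      have h2 := htgt_final j (n+1) (by omega)
      rw [htg] at h2
      have := target_ge h2
      omega
    have hcross : ∀ j s, (R j).rank (some s) < (R j).rank none →
        (R j).rank (some s) < (R j).rank (μ j) →
        ∃ n, target (R j) (traj E R n j) = some s ∧
          traj E R (n+1) j = (R j).rank (some s) + 1 ∧
          traj E R (n+1) j ≠ traj E R n j := by
      intro j s hacc hlt
      have hup : (R j).rank (some s) < traj E R (NN R) j := by
        by_contra hc
        have hm := target_min (p := R j) (n := traj E R (NN R) j) (x := some s)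
          (le_of_lt hacc) (Or.inr (by omega))
        have l3 : (R j).rank (μ j) = (R j).rank (target (R j) (traj E R (NN R) j)) := rfl
        omega
      have hex2 : ∃ m, (R j).rank (some s) < traj E R m j := ⟨NN R, hup⟩
      have hm0 : 0 < Nat.find hex2 := by
        rcases Nat.eq_zero_or_pos (Nat.find hex2) with h | h
        · exfalso
          have hsp := Nat.find_spec hex2
          rw [h] at hsp
          simp [traj] at hsp
        · exact h
      set n := Nat.find hex2 - 1 with hn
      have h1 : ¬ (R j).rank (some s) < traj E R n j := Nat.find_min hex2 (by omega)
      have h2 : (R j).rank (some s) < traj E R (n+1) j := by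
        have := Nat.find_spec hex2
        have he : n + 1 = Nat.find hex2 := by omega
        rw [he]
        exact this
      have hch : traj E R (n+1) j ≠ traj E R n j := by omega
      obtain ⟨s', htg, hval⟩ := hchange n j hch
      have h3 : (R j).rank (target (R j) (traj E R n j)) ≤ (R j).rank (some s) :=
        target_min (le_of_lt hacc) (Or.inr (by omega))
      rw [htg] at h3
      have h4 : (R j).rank (some s') = (R j).rank (some s) := by omega
      have h5 : s' = s := Option.some.inj ((R j).inj h4)
      subst h5
      exact ⟨n, htg, hval, hch⟩
    -- the last first-proposal of a J-student to his final school
    obtain ⟨j₀, hj₀J, hθeq⟩ := Finset.exists_mem_eq_sup' hne f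
    set θ := J.sup' hne f with hθdef
    have hθsup : ∀ j ∈ J, f j ≤ θ := fun j hj => Finset.le_sup' f hj
    have hfj₀ : f j₀ = θ := hθeq.symm
    obtain ⟨w₀, hw₀T, hμj₀⟩ := hKB j₀ hj₀J
    obtain ⟨jh, hjhJ, hνjh⟩ := (hTmem w₀).mp hw₀T
    obtain ⟨s'', hνjh', hacc_jh, hlt_jh⟩ := hJν jh hjhJ
    have hss : s'' = w₀ := by
      rw [hνjh] at hνjh'
      exact (Option.some.inj hνjh').symm
    rw [hss] at hacc_jh hlt_jh
    obtain ⟨τ, htgtτ, hcτ, hchτ⟩ := hcross jh w₀ hacc_jh hlt_jh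
    have hτf : τ < f jh := by
      by_contra hc
      exact hchτ (hnomove jh τ (by omega))
    have hτθ : τ < θ := lt_of_lt_of_le hτf (hθsup jh hjhJ)
    have hθ1 : 1 ≤ θ := by omega
    have hspecj₀ : target (R j₀) (traj E R θ j₀) = μ j₀ := by
      have h0 : target (R j₀) (traj E R (f j₀) j₀) = μ j₀ := Nat.find_spec (hex j₀)
      rwa [hfj₀] at h0
    have hj₀change : traj E R θ j₀ ≠ traj E R (θ-1) j₀ := by
      intro hc
      have h1 : target (R j₀) (traj E R (θ-1) j₀) = μ j₀ := by rwa [hc] at hspecj₀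
      exact Nat.find_min (hex j₀) (show θ - 1 < f j₀ by omega) h1
    have hstep : traj E R θ = step E R (traj E R (θ-1)) := by
      have he : θ - 1 + 1 = θ := by omega
      conv_lhs => rw [← he]
      rw [traj_succ]
    obtain ⟨s₀, r, hover, hr, hmax, heqst⟩ :
        ∃ s₀ r, E.quota s₀ < (pool R (traj E R (θ-1)) s₀).card ∧
          r ∈ pool R (traj E R (θ-1)) s₀ ∧
          (∀ j ∈ pool R (traj E R (θ-1)) s₀, E.prank s₀ j ≤ E.prank s₀ r) ∧
          step E R (traj E R (θ-1)) =
            Function.update (traj E R (θ-1)) r ((R r).rank (some s₀) + 1) := by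
      rcases step_spec E R (traj E R (θ-1)) with ⟨heq, _⟩ | hgood
      · exfalso; apply hj₀change; rw [hstep, heq]
      · exact hgood
    have hrj₀ : r = j₀ := by
      by_contra hc
      apply hj₀change
      rw [hstep, heqst, Function.update_of_ne (fun e => hc e.symm)]
    have huniq : ∀ j, j ≠ j₀ → traj E R θ j = traj E R (θ-1) j := by
      intro j hj
      rw [hstep, heqst, hrj₀, Function.update_of_ne hj]
    have hjhj₀ : jh ≠ j₀ := by
      rintro rfl
      rw [hμj₀] at hlt_jh
      omega
    have hτne : τ ≠ θ - 1 := by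
      intro hc
      have h1 : traj E R θ jh ≠ traj E R (θ-1) jh := by
        rw [show θ - 1 = τ from hc.symm, show θ = τ + 1 by omega]
        exact hchτ
      exact h1 (huniq jh hjhj₀)
    have hinv : E.quota w₀ ≤ ((pool R (traj E R (θ-1)) w₀).filter
        fun k => E.higher w₀ k jh).card := by
      apply invA_traj E R (θ-1) jh w₀ hacc_jh
      have h1 : traj E R (τ+1) jh ≤ traj E R (θ-1) jh := traj_mono E R (by omega) jh
      omega
    set Hset := (pool R (traj E R (θ-1)) w₀).filter (fun k => E.higher w₀ k jh)
      with hHsetdef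
    have hHpool : Hset ⊆ pool R (traj E R (θ-1)) w₀ := Finset.filter_subset _ _
    have hj₀pool : j₀ ∉ pool R (traj E R (θ-1)) w₀ := by
      intro hc
      have h1 := mem_pool.mp hc
      rw [← hμj₀] at h1
      exact Nat.find_min (hex j₀) (show θ - 1 < f j₀ by omega) h1
    have hj₀Hset : j₀ ∉ Hset := fun hc => hj₀pool (hHpool hc)
    have hQ0 : ∀ h ∈ Hset, target (R h) (traj E R (θ - 1 + 0) h) = some w₀ := by
      intro h hh
      exact mem_pool.mp (hHpool hh)
    have hQfail : ∃ d, ¬ ∀ h ∈ Hset, target (R h) (traj E R (θ - 1 + d) h) = some w₀ := by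
      refine ⟨NN R, ?_⟩
      intro hall
      have htr : traj E R (θ - 1 + NN R) = traj E R (NN R) :=
        traj_stable E R (by omega)
      have hsubpool : insert j₀ Hset ⊆ pool R (traj E R (NN R)) w₀ := by
        intro k hk
        rcases Finset.mem_insert.mp hk with rfl | hk
        · rw [mem_pool, ← hμj₀]
          exact htgt_final k (NN R) (hfNN k)
        · rw [mem_pool]
          have h2 := hall k hk
          rwa [htr] at h2
      have h1 : (insert j₀ Hset).card ≤ E.quota w₀ :=
        le_trans (Finset.card_le_card hsubpool) (pool_fix E R w₀)
      rw [Finset.card_insert_of_notMem hj₀Hset] at h1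
      omega
    set d₀ := Nat.find hQfail with hd₀def
    have hd₀spec : ¬ ∀ h ∈ Hset, target (R h) (traj E R (θ - 1 + d₀) h) = some w₀ :=
      Nat.find_spec hQfail
    have hd₀pos : 0 < d₀ := by
      rcases Nat.eq_zero_or_pos d₀ with hzero | hpos
      · exfalso
        rw [hzero] at hd₀spec
        exact hd₀spec hQ0
      · exact hpos
    have hQprev : ∀ h ∈ Hset, target (R h) (traj E R (θ - 1 + (d₀ - 1)) h) = some w₀ :=
      not_not.mp (Nat.find_min hQfail (show d₀ - 1 < d₀ from by omega))
    set nh := θ - 1 + (d₀ - 1) with hnhdef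
    obtain ⟨h, hhH, hhtg⟩ : ∃ h ∈ Hset, target (R h) (traj E R (nh + 1) h) ≠ some w₀ := by
      have h1 : θ - 1 + d₀ = nh + 1 := by omega
      rw [← h1]
      push_neg at hd₀spec
      exact hd₀spec
    have hchh : traj E R (nh+1) h ≠ traj E R nh h := by
      intro hc
      apply hhtg
      rw [hc]
      exact hQprev h hhH
    obtain ⟨s', htgh, hvalh⟩ := hchange nh h hchh
    have hs'w : s' = w₀ := by
      have h2 := hQprev h hhH
      rw [htgh] at h2
      exact Option.some.inj h2
    rw [hs'w] at htgh hvalh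
    have hnhθ : θ ≤ nh := by
      rcases Nat.lt_or_ge nh θ with hlt | hge
      · exfalso
        have hnheq : nh = θ - 1 := by omega
        have hhj₀ : h = j₀ := by
          by_contra hc
          apply hchh
          rw [hnheq, show θ - 1 + 1 = θ by omega]
          exact huniq h hc
        exact hj₀Hset (hhj₀ ▸ hhH)
      · exact hge
    have hhJ : h ∉ J := by
      intro hc
      exact hchh (hnomove h nh (le_trans (hθsup h hc) hnhθ))
    have hnhNN : nh < NN R := by
      by_contra hge
      push_neg at hge
      apply hchh
      rw [traj_stable E R (by omega), traj_stable E R hge]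
    have htrNN : (R h).rank (some w₀) < traj E R (NN R) h := by
      have h1 : traj E R (nh+1) h ≤ traj E R (NN R) h := traj_mono E R (by omega) h
      omega
    have hμh : (R h).rank (some w₀) < (R h).rank (μ h) := by
      cases hμc : μ h with
      | none =>
        have hb := traj_bound E R (NN R) h
        have h2 : (R h).rank (μ h) = (R h).rank none := by rw [hμc]
        omega
      | some u =>
        have h1 : target (R h) (traj E R (NN R) h) = some u := hμc
        have h2 := target_ge h1
        have h3 : (R h).rank (μ h) = (R h).rank (some u) := by rw [hμc]
        omega
    have hJh : (R h).rank (μ h) ≤ (R h).rank (ν h) := by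
      by_contra hc
      exact hhJ ((hJmem h).mpr (by omega))
    refine ⟨h, w₀, hJh, ⟨by omega, Or.inr ⟨jh, hνjh, ?_⟩⟩⟩
    exact (Finset.mem_filter.mp hhH).2

/-- **Strategy-proofness of DA** (Dubins–Freedman, Roth). -/
lemma DA_sp (E : Prio I S) (R : I → Pref S) (i : I) (Z : Pref S) :
    (R i).rank (DA E R i) ≤ (R i).rank (DA E (Function.update R i Z) i) := by
  classical
  set R' := Function.update R i Z with hR'
  set ν := DA E R' with hν
  have hνst : Stable E R' ν := (DA_spec E R').1
  rw [DA_eq_DAout]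
  by_contra hcon
  push_neg at hcon
  have hne : (Finset.univ.filter fun j =>
      (R j).rank (ν j) < (R j).rank (DAout E R j)).Nonempty :=
    ⟨i, Finset.mem_filter.mpr ⟨Finset.mem_univ i, hcon⟩⟩
  obtain ⟨k, s, hkle, hblk⟩ := blocking_lemma E R ν hνst.1 hne
  have hki : k ≠ i := by
    intro e
    subst e
    omega
  apply hνst.2.2 k s
  have hRk : R' k = R k := by rw [hR']; exact Function.update_of_ne hki Z R
  exact ⟨by rw [hRk]; exact hblk.1, hblk.2⟩

/-! ### Order-equivalence of preferences on the acceptable part -/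

/-- Two preferences agreeing on acceptability and on the order of acceptable options. -/
def EquivAcc (p q : Pref S) : Prop :=
  (∀ x, p.rank x ≤ p.rank none ↔ q.rank x ≤ q.rank none) ∧
  (∀ x y, p.rank x ≤ p.rank none → p.rank y ≤ p.rank none →
    (p.rank x < p.rank y ↔ q.rank x < q.rank y))

lemma equivAcc_refl (p : Pref S) : EquivAcc p p :=
  ⟨fun _ => Iff.rfl, fun _ _ _ _ => Iff.rfl⟩

lemma equivAcc_symm {p q : Pref S} (h : EquivAcc p q) : EquivAcc q p := by
  obtain ⟨h1, h2⟩ := h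
  exact ⟨fun x => (h1 x).symm,
    fun x y hx hy => (h2 x y ((h1 x).mpr hx) ((h1 y).mpr hy)).symm⟩

lemma stable_equiv (E : Prio I S) {R R' : I → Pref S}
    (h : ∀ j, EquivAcc (R j) (R' j)) {μ : Matching I S} (hst : Stable E R μ) :
    Stable E R' μ := by
  obtain ⟨hF, hIR, hnb⟩ := hst
  refine ⟨hF, fun j => ((h j).1 (μ j)).mp (hIR j), ?_⟩
  intro j s hblk
  obtain ⟨hlt, hseat⟩ := hblk
  apply hnb j s
  have hμacc : (R j).rank (μ j) ≤ (R j).rank none := hIR j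
  have hμacc' : (R' j).rank (μ j) ≤ (R' j).rank none := ((h j).1 (μ j)).mp hμacc
  have hsacc' : (R' j).rank (some s) ≤ (R' j).rank none :=
    le_trans (le_of_lt hlt) hμacc'
  have hsacc : (R j).rank (some s) ≤ (R j).rank none := ((h j).1 (some s)).mpr hsacc'
  exact ⟨((h j).2 (some s) (μ j) hsacc hμacc).mpr hlt, hseat⟩

lemma SO_equiv (E : Prio I S) {R R' : I → Pref S}
    (h : ∀ j, EquivAcc (R j) (R' j)) {μ : Matching I S}
    (hso : StudentOptimal E R μ) : StudentOptimal E R' μ := by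
  obtain ⟨hst, hopt⟩ := hso
  refine ⟨stable_equiv E h hst, ?_⟩
  intro lam hlam j
  have hlam' : Stable E R lam := stable_equiv E (fun j => equivAcc_symm (h j)) hlam
  have h1 := hopt lam hlam' j
  have hμacc : (R j).rank (μ j) ≤ (R j).rank none := hst.2.1 j
  have hlacc : (R j).rank (lam j) ≤ (R j).rank none := hlam'.2.1 j
  by_contra hcon
  push_neg at hcon
  have h2 := ((h j).2 (lam j) (μ j) hlacc hμacc).mpr hcon
  omega

lemma DA_equiv (E : Prio I S) {R R' : I → Pref S}
    (h : ∀ j, EquivAcc (R j) (R' j)) : DA E R = DA E R' :=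
  SO_unique E R' (SO_equiv E h (DA_spec E R)) (DA_spec E R')

/-! ### Same matched students across comparable stable matchings -/

lemma matched_same (E : Prio I S) (P : I → Pref S) {σ ν : Matching I S}
    (hσ : Stable E P σ) (hν : Stable E P ν)
    (hdom : ∀ i, (P i).rank (ν i) ≤ (P i).rank (σ i)) :
    ∀ i, σ i = none → ν i = none := by
  classical
  have hsub : (Finset.univ.filter fun i => σ i ≠ none) ⊆
      (Finset.univ.filter fun i => ν i ≠ none) := by
    intro i hi
    simp only [Finset.mem_filter, Finset.mem_univ, true_and] at hi ⊢
    intro hνi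
    apply hi
    have h1 := hdom i
    have h2 := hσ.2.1 i
    rw [hνi] at h1
    exact (P i).inj (le_antisymm h2 h1)
  have hcardle : ∀ s, (assigned ν s).card ≤ (assigned σ s).card := by
    intro s
    by_contra hcon
    push_neg at hcon
    have hvac : (assigned σ s).card < E.quota s := lt_of_lt_of_le hcon (hν.1 s)
    obtain ⟨i, hiν, hiσ⟩ : ∃ i, ν i = some s ∧ σ i ≠ some s := by
      by_contra hno
      push_neg at hno
      have hss : assigned ν s ⊆ assigned σ s := by
        intro i hi
        simp only [assigned, Finset.mem_filter, Finset.mem_univ, true_and] at hi ⊢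
        exact hno i hi
      have := Finset.card_le_card hss
      omega
    apply hσ.2.2 i s
    refine ⟨?_, Or.inl hvac⟩
    have h1 := hdom i
    rw [hiν] at h1
    exact rank_lt_of_le_ne (P i) h1 (fun e => hiσ e.symm)
  have hcount : ∀ (lam : Matching I S),
      (Finset.univ.filter fun i => lam i ≠ none).card =
        Finset.univ.sum (fun s => (assigned lam s).card) := by
    intro lam
    have hset : (Finset.univ.filter fun i => lam i ≠ none) =
        Finset.univ.biUnion (fun s => assigned lam s) := by
      ext i
      simp only [Finset.mem_filter, Finset.mem_univ, true_and, Finset.mem_biUnion,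
        assigned]
      constructor
      · intro hi
        cases hl : lam i with
        | none => exact absurd hl hi
        | some s => exact ⟨s, rfl⟩
      · rintro ⟨s, hs⟩
        rw [hs]
        simp
    rw [hset]
    apply Finset.card_biUnion
    intro s _ s' _ hss
    simp only [Finset.disjoint_left, assigned, Finset.mem_filter, Finset.mem_univ,
      true_and]
    intro k h1 h2
    rw [h1] at h2
    exact hss (Option.some.inj h2)
  have h1 : (Finset.univ.filter fun i => ν i ≠ none).card ≤
      (Finset.univ.filter fun i => σ i ≠ none).card := by
    rw [hcount σ, hcount ν]
    exact Finset.sum_le_sum (fun s _ => hcardle s)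
  have heq := Finset.eq_of_subset_of_card_le hsub h1
  intro i hσi
  by_contra hνi
  have hmem : i ∈ Finset.univ.filter fun i => ν i ≠ none :=
    Finset.mem_filter.mpr ⟨Finset.mem_univ i, hνi⟩
  rw [← heq] at hmem
  exact (Finset.mem_filter.mp hmem).2 hσi

/-! ### Rank computations for `trunc` and `reshuffle` -/

lemma rank_some_le_none_iff (p : Pref S) (s : S) :
    p.rank (some s) ≤ p.rank none ↔ p.rank (some s) < p.rank none := by
  constructor
  · intro h; exact rank_lt_of_le_ne p h (by simp)
  · exact le_of_lt

lemma trunc_rank_none (A : S → Prop) [DecidablePred A] (p : Pref S) :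
    (trunc A p).rank none = p.rank none := by
  simp [trunc, goodB]

lemma trunc_rank_pos {A : S → Prop} [DecidablePred A] (p : Pref S) {s : S} (h : A s) :
    (trunc A p).rank (some s) = p.rank (some s) := by
  simp [trunc, goodB, h]

lemma trunc_rank_neg {A : S → Prop} [DecidablePred A] (p : Pref S) {s : S} (h : ¬ A s) :
    (trunc A p).rank (some s) = bnd p + p.rank (some s) := by
  simp [trunc, goodB, h]

lemma resh_rank_none (t : S → ℕ) (p : Pref S) :
    (reshuffle t p).rank none = (Finset.univ.sup t + 1) * bnd p := rfl

lemma resh_rank_acc (t : S → ℕ) (p : Pref S) {s : S}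
    (h : p.rank (some s) < p.rank none) :
    (reshuffle t p).rank (some s) = t s * bnd p + p.rank (some s) := by
  simp only [reshuffle, Option.elim_some]
  rw [if_pos h]

lemma resh_rank_unacc (t : S → ℕ) (p : Pref S) {s : S}
    (h : ¬ p.rank (some s) < p.rank none) :
    (reshuffle t p).rank (some s) =
      (Finset.univ.sup t + 1) * bnd p + 1 + p.rank (some s) := by
  simp only [reshuffle, Option.elim_some]
  rw [if_neg h]

lemma resh_acc_iff (t : S → ℕ) (p : Pref S) (s : S) :
    (reshuffle t p).rank (some s) < (reshuffle t p).rank none ↔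
      p.rank (some s) < p.rank none := by
  by_cases h : p.rank (some s) < p.rank none
  · rw [resh_rank_acc t p h, resh_rank_none]
    have h1 := mul_add_lt (Finset.le_sup (Finset.mem_univ s) : t s ≤ Finset.univ.sup t)
      (rank_lt_bnd p (some s))
    constructor <;> intro _
    · exact h
    · exact h1
  · rw [resh_rank_unacc t p h, resh_rank_none]
    constructor
    · intro hc; omega
    · intro hc; exact absurd hc h

/-- A preference aligned with the tiers on its acceptable part. -/
def WeakAligned (t : S → ℕ) (p : Pref S) : Prop :=
  ∀ s s', p.rank (some s') < p.rank none → p.rank (some s) ≤ p.rank (some s') →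
    t s ≤ t s'

lemma aligned_weakAligned (t : S → ℕ) (p : Pref S) (h : AlignedPref t p) :
    WeakAligned t p :=
  fun s s' _ hle => h s s' hle

lemma resh_weakAligned (t : S → ℕ) (p : Pref S) : WeakAligned t (reshuffle t p) := by
  intro s s' hacc' hle
  have hs' : p.rank (some s') < p.rank none := (resh_acc_iff t p s').mp hacc'
  have hs : p.rank (some s) < p.rank none := by
    by_contra hc
    rw [resh_rank_unacc t p hc, resh_rank_acc t p hs'] at hle
    have h1 := mul_add_lt (Finset.le_sup (Finset.mem_univ s') : t s' ≤ Finset.univ.sup t)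
      (rank_lt_bnd p (some s'))
    omega
  rw [resh_rank_acc t p hs, resh_rank_acc t p hs'] at hle
  by_contra hc
  push_neg at hc
  have h2 := mul_add_lt (show t s' ≤ t s - 1 by omega) (rank_lt_bnd p (some s'))
  have h3 : (t s - 1 + 1) * bnd p = t s * bnd p := by
    congr 1
    omega
  rw [h3] at h2
  omega

lemma equivAcc_truncFalse (p q : Pref S) :
    EquivAcc (trunc (fun _ : S => False) p) (trunc (fun _ : S => False) q) := by
  have hchar : ∀ (r : Pref S) (x : Option S),
      (trunc (fun _ : S => False) r).rank x ≤ (trunc (fun _ : S => False) r).rank none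
        ↔ x = none := by
    intro r x
    cases x with
    | none => simp
    | some s =>
      rw [trunc_rank_neg r not_false, trunc_rank_none]
      have h1 := rank_lt_bnd r none
      constructor
      · intro h; omega
      · intro h; cases h
  constructor
  · intro x
    rw [hchar p x, hchar q x]
  · intro x y hx hy
    rw [hchar p x] at hx
    rw [hchar p y] at hy
    subst hx
    subst hy
    have h1 := hchar p none
    have h2 := hchar q none
    simp

lemma equivAcc_trunc_resh (t : S → ℕ) (k : ℕ) (p : Pref S) :
    EquivAcc (trunc (fun s => t s = k) p) (trunc (fun s => t s = k) (reshuffle t p)) := by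
  set q := reshuffle t p with hq
  have hchar1 : ∀ s : S, ((trunc (fun s => t s = k) p).rank (some s) ≤
      (trunc (fun s => t s = k) p).rank none ↔
        (t s = k ∧ p.rank (some s) < p.rank none)) := by
    intro s
    rw [trunc_rank_none]
    by_cases ht : t s = k
    · rw [trunc_rank_pos p ht, rank_some_le_none_iff]
      exact ⟨fun h => ⟨ht, h⟩, fun h => h.2⟩
    · rw [trunc_rank_neg p ht]
      have h1 := rank_lt_bnd p none
      exact ⟨fun h => by omega, fun h => absurd h.1 ht⟩
  have hchar2 : ∀ s : S, ((trunc (fun s => t s = k) q).rank (some s) ≤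
      (trunc (fun s => t s = k) q).rank none ↔
        (t s = k ∧ p.rank (some s) < p.rank none)) := by
    intro s
    rw [trunc_rank_none]
    by_cases ht : t s = k
    · rw [trunc_rank_pos q ht, rank_some_le_none_iff, hq, resh_acc_iff]
      exact ⟨fun h => ⟨ht, h⟩, fun h => h.2⟩
    · rw [trunc_rank_neg q ht]
      have h1 := rank_lt_bnd q none
      exact ⟨fun h => by omega, fun h => absurd h.1 ht⟩
  constructor
  · intro x
    cases x with
    | none => simp
    | some s => rw [hchar1 s, hchar2 s]
  · intro x y hx hy
    have hK : ∀ s : S, t s ≤ Finset.univ.sup t :=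
      fun s => Finset.le_sup (Finset.mem_univ s)
    have hrk : ∀ x : Option S, ((trunc (fun s => t s = k) p).rank x ≤
        (trunc (fun s => t s = k) p).rank none) →
        (x = none ∨ ∃ s, x = some s ∧ t s = k ∧ p.rank (some s) < p.rank none) := by
      intro x hxa
      cases x with
      | none => exact Or.inl rfl
      | some s =>
        obtain ⟨ht, hacc⟩ := (hchar1 s).mp hxa
        exact Or.inr ⟨s, rfl, ht, hacc⟩
    rcases hrk x hx with rfl | ⟨s, rfl, hts, haccs⟩
    · rcases hrk y hy with rfl | ⟨s', rfl, hts', haccs'⟩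
      · simp
      · rw [trunc_rank_none, trunc_rank_none, trunc_rank_pos p hts',
          trunc_rank_pos q hts', hq, resh_rank_none, resh_rank_acc t p haccs']
        have h1 := mul_add_lt (hK s') (rank_lt_bnd p (some s'))
        exact ⟨fun h => by omega, fun h => by omega⟩
    · rcases hrk y hy with rfl | ⟨s', rfl, hts', haccs'⟩
      · rw [trunc_rank_none, trunc_rank_none, trunc_rank_pos p hts,
          trunc_rank_pos q hts, hq, resh_rank_none, resh_rank_acc t p haccs]
        have h1 := mul_add_lt (hK s) (rank_lt_bnd p (some s))
        exact ⟨fun _ => by omega, fun _ => haccs⟩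
      · rw [trunc_rank_pos p hts, trunc_rank_pos p hts', trunc_rank_pos q hts,
          trunc_rank_pos q hts', hq, resh_rank_acc t p haccs, resh_rank_acc t p haccs',
          hts, hts']
        omega

/-- The key decomposition step: with weakly aligned preferences, the round-`(k+1)`
deferred acceptance assigns to the still-unmatched students exactly their DA schools
of tier `k+1`. -/
lemma round_DA (E : Prio I S) (t : S → ℕ) (Q : I → Pref S)
    (hW : ∀ j, WeakAligned t (Q j)) (k : ℕ) :
    DA E (fun j =>
      if (DA E Q j).bind (fun s => if t s ≤ k then some s else none) = none
      then trunc (fun s => t s = k + 1) (Q j)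
      else trunc (fun _ => False) (Q j)) =
    fun i => (DA E Q i).bind (fun s => if t s = k + 1 then some s else none) := by
  classical
  have hso := DA_spec E Q
  have hstQ : Stable E Q (DA E Q) := hso.1
  set μ := DA E Q with hμdef
  set Pk : I → Pref S := fun j =>
    if (μ j).bind (fun s => if t s ≤ k then some s else none) = none
    then trunc (fun s => t s = k + 1) (Q j)
    else trunc (fun _ => False) (Q j) with hPkdef
  set σ : Matching I S :=
    fun i => (μ i).bind (fun s => if t s = k + 1 then some s else none) with hσdef
  show DA E Pk = σ
  -- basic case analyses
  have hμIR : ∀ i s₀, μ i = some s₀ → (Q i).rank (some s₀) < (Q i).rank none := by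
    intro i s₀ hm
    have h1 := hstQ.2.1 i
    rw [hm] at h1
    exact (rank_some_le_none_iff (Q i) s₀).mp h1
  have hPk_cases : ∀ j, (Pk j = trunc (fun s => t s = k + 1) (Q j) ∧
      (μ j = none ∨ ∃ s, μ j = some s ∧ ¬ t s ≤ k)) ∨
      (Pk j = trunc (fun _ => False) (Q j) ∧ ∃ s, μ j = some s ∧ t s ≤ k) := by
    intro j
    simp only [hPkdef]
    cases hm : μ j with
    | none =>
      left
      refine ⟨?_, Or.inl rfl⟩
      simp
    | some s =>
      by_cases ht : t s ≤ k
      · right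
        refine ⟨?_, s, rfl, ht⟩
        simp [ht]
      · left
        refine ⟨?_, Or.inr ⟨s, rfl, ht⟩⟩
        simp [ht]
  have hσ_some_of : ∀ i s, μ i = some s → t s = k + 1 → σ i = some s := by
    intro i s hm ht
    simp only [hσdef, hm, Option.bind_some]
    rw [if_pos ht]
  have hσ_none_of' : ∀ i s, μ i = some s → t s ≠ k + 1 → σ i = none := by
    intro i s hm ht
    simp only [hσdef, hm, Option.bind_some]
    rw [if_neg ht]
  have hσ_inv : ∀ i s, σ i = some s → μ i = some s ∧ t s = k + 1 := by
    intro i s hv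
    simp only [hσdef] at hv
    cases hm : μ i with
    | none => rw [hm] at hv; cases hv
    | some s₀ =>
      rw [hm, Option.bind_some] at hv
      by_cases ht : t s₀ = k + 1
      · rw [if_pos ht] at hv
        obtain rfl := Option.some.inj hv
        exact ⟨rfl, ht⟩
      · rw [if_neg ht] at hv
        cases hv
  have h_as_σ : ∀ s, t s = k + 1 → assigned σ s = assigned μ s := by
    intro s ht
    ext j
    simp only [assigned, Finset.mem_filter, Finset.mem_univ, true_and]
    exact ⟨fun h => (hσ_inv j s h).1, fun h => hσ_some_of j s h ht⟩
  -- stability of σ in the round market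
  have hσ_stable : Stable E Pk σ := by
    refine ⟨?_, ?_, ?_⟩
    · intro s
      by_cases ht : t s = k + 1
      · rw [h_as_σ s ht]
        exact hstQ.1 s
      · have hempty : assigned σ s = ∅ := by
          ext j
          simp only [assigned, Finset.mem_filter, Finset.mem_univ, true_and,
            Finset.notMem_empty, iff_false]
          intro hc
          exact ht (hσ_inv j s hc).2
        rw [hempty]
        simp
    · intro i
      cases hσc : σ i with
      | none => exact le_rfl
      | some s =>
        obtain ⟨hm, ht⟩ := hσ_inv i s hσc
        have hP : Pk i = trunc (fun s => t s = k + 1) (Q i) := by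
          rcases hPk_cases i with ⟨hP, _⟩ | ⟨_, s', hm', ht'⟩
          · exact hP
          · rw [hm] at hm'
            obtain rfl := Option.some.inj hm'
            omega
        rw [hP, trunc_rank_none, trunc_rank_pos (Q i) ht]
        exact le_of_lt (hμIR i s hm)
    · intro i s hblk
      obtain ⟨hlt, hseat⟩ := hblk
      rcases hPk_cases i with ⟨hP, hor⟩ | ⟨hP, s₀, hm₀, ht₀⟩
      · -- i not yet matched; its round preference is the tier-(k+1) truncation
        by_cases hts : t s = k + 1
        · -- the envied school is in this round's tier
          rw [hP, trunc_rank_pos (Q i) hts] at hlt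
          have hQblk : Blocks E Q μ i s := by
            constructor
            · cases hσc : σ i with
              | none =>
                rw [hσc, trunc_rank_none] at hlt
                rcases hor with hm | ⟨s₀, hm, ht₀⟩
                · rw [hm]; exact hlt
                · rw [hm]
                  have hne : t s₀ ≠ k + 1 := by
                    intro he
                    have h3 := hσ_some_of i s₀ hm he
                    rw [hσc] at h3
                    cases h3
                  by_contra hc
                  push_neg at hc
                  have h2 := hW i s₀ s hlt hc
                  omega
              | some s₁ =>
                obtain ⟨hm, ht₁⟩ := hσ_inv i s₁ hσc
                rw [hσc, trunc_rank_pos (Q i) ht₁] at hlt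
                rw [hm]
                exact hlt
            · rcases hseat with hvac | ⟨j, hj, hhi⟩
              · rw [h_as_σ s hts] at hvac
                exact Or.inl hvac
              · exact Or.inr ⟨j, (hσ_inv j s hj).1, hhi⟩
          exact hstQ.2.2 i s hQblk
        · -- the envied school is outside this round: it is unacceptable in `Pk i`
          rw [hP, trunc_rank_neg (Q i) hts] at hlt
          have h1 := rank_lt_bnd (Q i) (σ i)
          cases hσc : σ i with
          | none =>
            rw [hσc, trunc_rank_none] at hlt
            have := rank_lt_bnd (Q i) none
            omega
          | some s₁ =>
            obtain ⟨hm, ht₁⟩ := hσ_inv i s₁ hσc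
            rw [hσc, trunc_rank_pos (Q i) ht₁] at hlt
            have := rank_lt_bnd (Q i) (some s₁)
            omega
      · -- i already matched in an earlier tier: nothing is acceptable
        have hσi : σ i = none := hσ_none_of' i s₀ hm₀ (by omega)
        rw [hσi, hP, trunc_rank_none, trunc_rank_neg (Q i) not_false] at hlt
        have := rank_lt_bnd (Q i) none
        omega
  -- the round DA outcome
  have hroundso := DA_spec E Pk
  have hdom : ∀ i, (Pk i).rank (DA E Pk i) ≤ (Pk i).rank (σ i) :=
    hroundso.2 σ hσ_stable
  have hnone : ∀ i, σ i = none → DA E Pk i = none :=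
    matched_same E Pk hσ_stable hroundso.1 hdom
  have hnone2 : ∀ i, DA E Pk i = none → σ i = none := by
    intro i hv
    have h1 := hdom i
    rw [hv] at h1
    have h2 := hσ_stable.2.1 i
    exact (Pk i).inj (le_antisymm h2 h1)
  have hmatchedF : ∀ i, Pk i = trunc (fun _ => False) (Q i) → DA E Pk i = none := by
    intro i hP
    have hIR := hroundso.1.2.1 i
    cases hv : DA E Pk i with
    | none => rfl
    | some s' =>
      rw [hv, hP, trunc_rank_neg (Q i) not_false, trunc_rank_none] at hIR
      have := rank_lt_bnd (Q i) none
      omega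
  have hν'char : ∀ i s', DA E Pk i = some s' →
      Pk i = trunc (fun s => t s = k + 1) (Q i) ∧ t s' = k + 1 ∧
        (Q i).rank (some s') < (Q i).rank none := by
    intro i s' hv
    have hP : Pk i = trunc (fun s => t s = k + 1) (Q i) := by
      rcases hPk_cases i with ⟨hP, _⟩ | ⟨hP, _⟩
      · exact hP
      · exfalso
        have := hmatchedF i hP
        rw [hv] at this
        cases this
    refine ⟨hP, ?_⟩
    have hIR := hroundso.1.2.1 i
    rw [hv, hP, trunc_rank_none] at hIR
    by_cases ht : t s' = k + 1
    · rw [trunc_rank_pos (Q i) ht] at hIR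
      exact ⟨ht, (rank_some_le_none_iff (Q i) s').mp hIR⟩
    · rw [trunc_rank_neg (Q i) ht] at hIR
      have := rank_lt_bnd (Q i) none
      omega
  have hchain : ∀ i s₁, DA E Pk i = some s₁ → ∃ s₂, μ i = some s₂ ∧ t s₂ = k + 1 ∧
      (Q i).rank (some s₁) ≤ (Q i).rank (some s₂) ∧ σ i = some s₂ := by
    intro i s₁ hv
    obtain ⟨hP, ht₁, hacc₁⟩ := hν'char i s₁ hv
    cases hσc : σ i with
    | none =>
      exfalso
      have := hnone i hσc
      rw [hv] at this
      cases this
    | some s₂ =>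
      obtain ⟨hm, ht₂⟩ := hσ_inv i s₂ hσc
      have h1 := hdom i
      rw [hv, hσc, hP, trunc_rank_pos (Q i) ht₁, trunc_rank_pos (Q i) ht₂] at h1
      exact ⟨s₂, hm, ht₂, h1, rfl⟩
  -- the patched matching ρ
  set ρ : Matching I S := fun i => if DA E Pk i = none then μ i else DA E Pk i
    with hρdef
  have hρ_out : ∀ s, t s ≠ k + 1 → ∀ j, (ρ j = some s ↔ μ j = some s) := by
    intro s hts j
    simp only [hρdef]
    constructor
    · intro h
      by_cases hv : DA E Pk j = none
      · rwa [if_pos hv] at h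
      · rw [if_neg hv] at h
        obtain ⟨_, ht', _⟩ := hν'char j s h
        omega
    · intro h
      have hσj : σ j = none := hσ_none_of' j s h hts
      rw [if_pos (hnone j hσj)]
      exact h
  have hρ_mid : ∀ s, t s = k + 1 → ∀ j, (ρ j = some s ↔ DA E Pk j = some s) := by
    intro s hts j
    simp only [hρdef]
    constructor
    · intro h
      by_cases hv : DA E Pk j = none
      · rw [if_pos hv] at h
        have hσj : σ j = some s := hσ_some_of j s h hts
        have := hnone2 j hv
        rw [hσj] at this
        cases this
      · rwa [if_neg hv] at h
    · intro h
      rw [if_neg (by rw [h]; simp)]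
      exact h
  have h_as_out : ∀ s, t s ≠ k + 1 → assigned ρ s = assigned μ s := by
    intro s hts
    ext j
    simp only [assigned, Finset.mem_filter, Finset.mem_univ, true_and]
    exact hρ_out s hts j
  have h_as_mid : ∀ s, t s = k + 1 → assigned ρ s = assigned (DA E Pk) s := by
    intro s hts
    ext j
    simp only [assigned, Finset.mem_filter, Finset.mem_univ, true_and]
    exact hρ_mid s hts j
  -- ρ is stable in the original market
  have hρ_stable : Stable E Q ρ := by
    refine ⟨?_, ?_, ?_⟩
    · intro s
      by_cases hts : t s = k + 1
      · rw [h_as_mid s hts]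
        exact hroundso.1.1 s
      · rw [h_as_out s hts]
        exact hstQ.1 s
    · intro i
      simp only [hρdef]
      by_cases hv : DA E Pk i = none
      · rw [if_pos hv]
        exact hstQ.2.1 i
      · rw [if_neg hv]
        cases hv2 : DA E Pk i with
        | none => exact absurd hv2 hv
        | some s' =>
          obtain ⟨_, _, hacc⟩ := hν'char i s' hv2
          exact le_of_lt hacc
    · intro i s hblk
      obtain ⟨hlt, hseat⟩ := hblk
      by_cases hts : t s = k + 1
      · -- blocking pair would block the round matching (or weak alignment fails)
        rcases hPk_cases i with ⟨hP, hor⟩ | ⟨hP, s₀, hm₀, ht₀⟩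
        · apply hroundso.1.2.2 i s
          constructor
          · rw [hP]
            by_cases hv : DA E Pk i = none
            · rw [hv, trunc_rank_none, trunc_rank_pos (Q i) hts]
              have hρi : ρ i = μ i := by simp only [hρdef]; rw [if_pos hv]
              rw [hρi] at hlt
              rcases hor with hm | ⟨s₀, hm, _⟩
              · rw [hm] at hlt
                exact hlt
              · rw [hm] at hlt
                exact lt_trans hlt (hμIR i s₀ hm)
            · cases hv2 : DA E Pk i with
              | none => exact absurd hv2 hv
              | some s₁ =>
                obtain ⟨_, ht₁, _⟩ := hν'char i s₁ hv2
                rw [trunc_rank_pos (Q i) hts, trunc_rank_pos (Q i) ht₁]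
                have hρi : ρ i = some s₁ := by
                  simp only [hρdef]
                  rw [if_neg hv]
                  exact hv2
                rw [hρi] at hlt
                exact hlt
          · rcases hseat with hvac | ⟨j, hj, hhi⟩
            · rw [h_as_mid s hts] at hvac
              exact Or.inl hvac
            · exact Or.inr ⟨j, (hρ_mid s hts j).mp hj, hhi⟩
        · exfalso
          have hρi : ρ i = μ i := by
            simp only [hρdef]
            rw [if_pos (hmatchedF i hP)]
          rw [hρi, hm₀] at hlt
          have := hW i s s₀ (hμIR i s₀ hm₀) (le_of_lt hlt)
          omega
      · -- blocking pair would block μ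
        apply hstQ.2.2 i s
        constructor
        · by_cases hv : DA E Pk i = none
          · have : ρ i = μ i := by simp only [hρdef]; rw [if_pos hv]
            rw [← this]
            exact hlt
          · cases hv2 : DA E Pk i with
            | none => exact absurd hv2 hv
            | some s₁ =>
              have hρi : ρ i = some s₁ := by simp only [hρdef]; rw [if_neg hv]; exact hv2
              obtain ⟨s₂, hm, ht₂, hle, _⟩ := hchain i s₁ hv2
              rw [hρi] at hlt
              rw [hm]
              omega
        · rcases hseat with hvac | ⟨j, hj, hhi⟩
          · rw [h_as_out s hts] at hvac
            exact Or.inl hvac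
          · exact Or.inr ⟨j, (hρ_out s hts j).mp hj, hhi⟩
  -- conclude: the round DA equals σ
  funext i
  cases hv : DA E Pk i with
  | none => exact (hnone2 i hv).symm
  | some s₁ =>
    obtain ⟨s₂, hm, ht₂, hle, hσc⟩ := hchain i s₁ hv
    have hopt := hso.2 ρ hρ_stable i
    have hρi : ρ i = some s₁ := by
      simp only [hρdef]
      rw [if_neg (by rw [hv]; simp)]
      exact hv
    rw [hρi, hm] at hopt
    have heq : (Q i).rank (some s₁) = (Q i).rank (some s₂) := by omega
    obtain rfl := Option.some.inj ((Q i).inj heq)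
    exact hσc.symm

/-- **Decomposition**: with weakly aligned reported preferences, TDA reproduces the
tiers of the DA outcome round by round. -/
lemma TDAaux_eq_DA (E : Prio I S) (t : S → ℕ) (Q : I → Pref S)
    (h1 : ∀ s, 1 ≤ t s) (hW : ∀ j, WeakAligned t (Q j)) :
    ∀ k, TDAaux E t Q k =
      fun i => (DA E Q i).bind (fun s => if t s ≤ k then some s else none) := by
  intro k
  induction k with
  | zero =>
    funext i
    cases hm : DA E Q i with
    | none => simp [TDAaux, hm]
    | some s =>
      have hts : t s ≠ 0 := by have := h1 s; omega
      simp [TDAaux, hm, hts]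
  | succ k ih =>
    funext i
    have hTD : TDAaux E t Q (k + 1) i =
        match TDAaux E t Q k i with
        | some s => some s
        | none =>
            DA E (fun j =>
              if TDAaux E t Q k j = none then trunc (fun s => t s = k + 1) (Q j)
              else trunc (fun _ => False) (Q j)) i := rfl
    rw [hTD]
    simp only [ih]
    rw [round_DA E t Q hW k]
    cases hm : DA E Q i with
    | none => simp [hm]
    | some s =>
      by_cases ht : t s ≤ k
      · have ht' : t s ≤ k + 1 := by omega
        simp [hm, ht, ht']
      · by_cases ht2 : t s = k + 1
        · have ht' : t s ≤ k + 1 := by omega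
          simp [hm, ht, ht2, ht']
        · have ht' : ¬ t s ≤ k + 1 := by omega
          simp [hm, ht, ht2, ht']

/-- TDA is invariant under reshuffling one student's preference along the tiers. -/
lemma TDAaux_resh (E : Prio I S) (t : S → ℕ) (Q : I → Pref S) (i : I) :
    ∀ k, TDAaux E t Q k =
      TDAaux E t (Function.update Q i (reshuffle t (Q i))) k := by
  intro k
  induction k with
  | zero => rfl
  | succ k ih =>
    set Q' := Function.update Q i (reshuffle t (Q i)) with hQ'
    have hprof : DA E (fun l => if TDAaux E t Q k l = none
          then trunc (fun s => t s = k + 1) (Q l) else trunc (fun _ => False) (Q l)) =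
        DA E (fun l => if TDAaux E t Q' k l = none
          then trunc (fun s => t s = k + 1) (Q' l)
          else trunc (fun _ => False) (Q' l)) := by
      apply DA_equiv
      intro l
      rw [← ih]
      by_cases hl : l = i
      · subst hl
        rw [hQ', Function.update_self]
        by_cases hm : TDAaux E t Q k l = none
        · rw [if_pos hm, if_pos hm]
          exact equivAcc_trunc_resh t (k + 1) (Q l)
        · rw [if_neg hm, if_neg hm]
          exact equivAcc_truncFalse (Q l) (reshuffle t (Q l))
      · rw [hQ', Function.update_of_ne hl]
        by_cases hm : TDAaux E t Q k l = none
        · rw [if_pos hm]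
          exact equivAcc_refl _
        · rw [if_neg hm]
          exact equivAcc_refl _
    funext j
    have hTD : TDAaux E t Q (k + 1) j =
        match TDAaux E t Q k j with
        | some s => some s
        | none =>
            DA E (fun l =>
              if TDAaux E t Q k l = none then trunc (fun s => t s = k + 1) (Q l)
              else trunc (fun _ => False) (Q l)) j := rfl
    have hTD' : TDAaux E t Q' (k + 1) j =
        match TDAaux E t Q' k j with
        | some s => some s
        | none =>
            DA E (fun l =>
              if TDAaux E t Q' k l = none then trunc (fun s => t s = k + 1) (Q' l)
              else trunc (fun _ => False) (Q' l)) j := rfl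
    rw [hTD, hTD', ← hprof, ← ih]

/-- If true preferences are aligned with the tier structure, TDA is
outcome-equivalent to DA, and hence strategy-proof on this preference domain. -/
theorem TDA_aligned_outcome_equiv_and_strategyproof
    (E : Prio I S) (t : S → ℕ) (T : ℕ) (ht : IsTierStructure t T)
    (R : I → Pref S) (hA : ∀ i, AlignedPref t (R i)) :
    TDA E t R = DA E R ∧
    ∀ (i : I) (Qi' : Pref S),
      (R i).rank (TDA E t R i) ≤ (R i).rank (TDA E t (Function.update R i Qi') i) := by
  classical
  have h1s : ∀ s, 1 ≤ t s := fun s => (ht.1 s).1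
  have hmaster : ∀ (Q : I → Pref S), (∀ j, WeakAligned t (Q j)) → TDA E t Q = DA E Q := by
    intro Q hWQ
    unfold TDA
    rw [TDAaux_eq_DA E t Q h1s hWQ]
    funext i
    cases hm : DA E Q i with
    | none => simp [hm]
    | some s =>
      have hle : t s ≤ Finset.univ.sup t := Finset.le_sup (Finset.mem_univ s)
      simp [hm, hle]
  have hpart1 : TDA E t R = DA E R :=
    hmaster R (fun j => aligned_weakAligned t (R j) (hA j))
  refine ⟨hpart1, ?_⟩
  intro i Qi'
  rw [hpart1]
  have h2 : TDA E t (Function.update R i Qi') =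
      TDA E t (Function.update R i (reshuffle t Qi')) := by
    unfold TDA
    rw [TDAaux_resh E t (Function.update R i Qi') i (Finset.univ.sup t)]
    have hcollapse : Function.update (Function.update R i Qi') i
        (reshuffle t (Function.update R i Qi' i)) =
        Function.update R i (reshuffle t Qi') := by
      rw [Function.update_self, Function.update_idem]
    rw [hcollapse]
  have hW' : ∀ j, WeakAligned t (Function.update R i (reshuffle t Qi') j) := by
    intro j
    by_cases hj : j = i
    · subst hj
      rw [Function.update_self]
      exact resh_weakAligned t Qi'
    · rw [Function.update_of_ne hj]
      exact aligned_weakAligned t (R j) (hA j)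
  rw [h2, hmaster (Function.update R i (reshuffle t Qi')) hW']
  exact DA_sp E R i (reshuffle t Qi')

end SchoolChoice
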